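/- Over F₃ with R = F₃[x,y,z]/(x²−1, y²−1, z²−1), the element e = 2x + 2y + xy + 2xz + 2yz + xyz is idempotent (e² = e), and the ideal C = ⟨e⟩ is a linear code of length 8 and dimension 3 over F₃ with minimum Hamming distance 4. -/
import Mathlib


open MvPolynomial

set_option synthInstance.maxHeartbeats 1000000

/-- The ideal `(x²-1, y²-1, z²-1)` in `F₃[x,y,z]`. -/
noncomputable def I3 : Ideal (MvPolynomial (Fin 3) (ZMod 3)) :=
  Ideal.span (Set.range fun t : Fin 3 => (X t : MvPolynomial (Fin 3) (ZMod 3)) ^ 2 - 1)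

/-- The polynomial `e = 2x + 2y + xy + 2xz + 2yz + xyz` over `F₃`. -/
noncomputable def ePoly : MvPolynomial (Fin 3) (ZMod 3) :=
  2 * X 0 + 2 * X 1 + X 0 * X 1 + 2 * X 0 * X 2 + 2 * X 1 * X 2 + X 0 * X 1 * X 2

noncomputable section
namespace Opt3

abbrev P3 := MvPolynomial (Fin 3) (ZMod 3)

def pt : Fin 8 → Fin 3 → ZMod 3 :=
  ![![1,1,1],![2,1,1],![1,2,1],![2,2,1],![1,1,2],![2,1,2],![1,2,2],![2,2,2]]

@[simp] lemma pt_0_0 : pt 0 0 = 1 := rfl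
@[simp] lemma pt_0_1 : pt 0 1 = 1 := rfl
@[simp] lemma pt_0_2 : pt 0 2 = 1 := rfl
@[simp] lemma pt_1_0 : pt 1 0 = 2 := rfl
@[simp] lemma pt_1_1 : pt 1 1 = 1 := rfl
@[simp] lemma pt_1_2 : pt 1 2 = 1 := rfl
@[simp] lemma pt_2_0 : pt 2 0 = 1 := rfl
@[simp] lemma pt_2_1 : pt 2 1 = 2 := rfl
@[simp] lemma pt_2_2 : pt 2 2 = 1 := rfl
@[simp] lemma pt_3_0 : pt 3 0 = 2 := rfl
@[simp] lemma pt_3_1 : pt 3 1 = 2 := rfl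
@[simp] lemma pt_3_2 : pt 3 2 = 1 := rfl
@[simp] lemma pt_4_0 : pt 4 0 = 1 := rfl
@[simp] lemma pt_4_1 : pt 4 1 = 1 := rfl
@[simp] lemma pt_4_2 : pt 4 2 = 2 := rfl
@[simp] lemma pt_5_0 : pt 5 0 = 2 := rfl
@[simp] lemma pt_5_1 : pt 5 1 = 1 := rfl
@[simp] lemma pt_5_2 : pt 5 2 = 2 := rfl
@[simp] lemma pt_6_0 : pt 6 0 = 1 := rfl
@[simp] lemma pt_6_1 : pt 6 1 = 2 := rfl
@[simp] lemma pt_6_2 : pt 6 2 = 2 := rfl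
@[simp] lemma pt_7_0 : pt 7 0 = 2 := rfl
@[simp] lemma pt_7_1 : pt 7 1 = 2 := rfl
@[simp] lemma pt_7_2 : pt 7 2 = 2 := rfl

def bits : Fin 8 → Fin 3 → ℕ :=
  ![![0,0,0],![1,0,0],![0,1,0],![1,1,0],![0,0,1],![1,0,1],![0,1,1],![1,1,1]]

def mfun (j : Fin 8) : Fin 3 →₀ ℕ := Finsupp.equivFunOnFinite.symm (bits j)

def Amat (i j : Fin 8) : ZMod 3 := ∏ t, pt i t ^ bits j t

def gp (i : Fin 8) : P3 :=
  C 2 * (1 + C (pt i 0) * X 0) * (1 + C (pt i 1) * X 1) * (1 + C (pt i 2) * X 2)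

def Fc (c : Fin 8 → ZMod 3) : P3 := ∑ j, monomial (mfun j) (c j)

lemma mfun_apply (j : Fin 8) (t : Fin 3) : mfun j t = bits j t := rfl

lemma mfun_inj : Function.Injective mfun := by
  intro a b h
  have hb : bits a = bits b := by
    funext t; rw [← mfun_apply, ← mfun_apply, h]
  clear h
  revert hb; revert a b; decide

lemma hp2 : ∀ i t, pt i t ^ 2 = 1 := by decide

lemma eval_I3 (i : Fin 8) {q : P3} (hq : q ∈ I3) : eval (pt i) q = 0 := by
  have h : I3 ≤ RingHom.ker (eval (pt i)) := by
    rw [I3, Ideal.span_le]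
    rintro q ⟨t, rfl⟩
    simp [RingHom.mem_ker, hp2 i t]
  exact h hq

lemma eval_gp (k i : Fin 8) : eval (pt k) (gp i) = if k = i then 1 else 0 := by
  have h : eval (pt k) (gp i) =
      2 * ((1 + pt i 0 * pt k 0) * (1 + pt i 1 * pt k 1) * (1 + pt i 2 * pt k 2)) := by
    simp [gp]; ring
  rw [h]; clear h
  revert i; revert k; decide

lemma h3 : (3 : P3) = 0 := by
  have h : ((3 : ZMod 3)) = 0 := by decide
  calc (3:P3) = C (3 : ZMod 3) := (map_ofNat C 3).symm
  _ = 0 := by rw [h, map_zero]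

lemma sum_gp : ∑ i, gp i = 1 := by
  simp only [Fin.sum_univ_eight, gp, pt_0_0, pt_0_1, pt_0_2, pt_1_0, pt_1_1, pt_1_2,
    pt_2_0, pt_2_1, pt_2_2, pt_3_0, pt_3_1, pt_3_2, pt_4_0, pt_4_1, pt_4_2,
    pt_5_0, pt_5_1, pt_5_2, pt_6_0, pt_6_1, pt_6_2, pt_7_0, pt_7_1, pt_7_2,
    map_one, map_ofNat]
  linear_combination (5 + 8*X 0 + 8*X 1 + 8*X 2 + 12*(X 0*X 1) + 12*(X 0*X 2)
    + 12*(X 1*X 2) + 18*(X 0*X 1*X 2) : P3) * h3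

lemma smul_mk (a : ZMod 3) (q : P3) :
    a • Ideal.Quotient.mk I3 q = Ideal.Quotient.mk I3 (C a * q) := by
  rw [← smul_eq_C_mul, ← Ideal.Quotient.mkₐ_eq_mk (ZMod 3), map_smul]

lemma hCp2 (i : Fin 8) (t : Fin 3) : (C (pt i t) : P3) ^ 2 = 1 := by
  rw [← map_pow, hp2, map_one]

lemma shift (i : Fin 8) (t : Fin 3) :
    Ideal.Quotient.mk I3 (gp i * X t) = Ideal.Quotient.mk I3 (C (pt i t) * gp i) := by
  rw [Ideal.Quotient.eq]
  have hgen : (X t ^ 2 - 1 : P3) ∈ I3 := Ideal.subset_span ⟨t, rfl⟩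
  fin_cases t
  · show gp i * X 0 - C (pt i 0) * gp i ∈ I3
    have key : gp i * X 0 - C (pt i 0) * gp i =
        (C (pt i 0) * (C 2 * (1 + C (pt i 1) * X 1) * (1 + C (pt i 2) * X 2))) *
          (X 0 ^ 2 - 1) := by
      have ha := hCp2 i 0
      rw [gp]
      linear_combination (-(C 2 * (1 + C (pt i 1) * X 1) * (1 + C (pt i 2) * X 2) * X 0)) * ha
    rw [key]; exact Ideal.mul_mem_left _ _ hgen
  · show gp i * X 1 - C (pt i 1) * gp i ∈ I3
    have key : gp i * X 1 - C (pt i 1) * gp i =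
        (C (pt i 1) * (C 2 * (1 + C (pt i 0) * X 0) * (1 + C (pt i 2) * X 2))) *
          (X 1 ^ 2 - 1) := by
      have ha := hCp2 i 1
      rw [gp]
      linear_combination (-(C 2 * (1 + C (pt i 0) * X 0) * (1 + C (pt i 2) * X 2) * X 1)) * ha
    rw [key]; exact Ideal.mul_mem_left _ _ hgen
  · show gp i * X 2 - C (pt i 2) * gp i ∈ I3
    have key : gp i * X 2 - C (pt i 2) * gp i =
        (C (pt i 2) * (C 2 * (1 + C (pt i 0) * X 0) * (1 + C (pt i 1) * X 1))) *
          (X 2 ^ 2 - 1) := by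
      have ha := hCp2 i 2
      rw [gp]
      linear_combination (-(C 2 * (1 + C (pt i 0) * X 0) * (1 + C (pt i 1) * X 1) * X 2)) * ha
    rw [key]; exact Ideal.mul_mem_left _ _ hgen

lemma key_repr (f : P3) :
    Ideal.Quotient.mk I3 f = ∑ i, eval (pt i) f • Ideal.Quotient.mk I3 (gp i) := by
  induction f using MvPolynomial.induction_on with
  | C a =>
      simp only [eval_C]
      rw [← Finset.smul_sum, ← map_sum, sum_gp, smul_mk, mul_one]
  | add p q hp hq =>
      simp only [map_add]
      rw [hp, hq, ← Finset.sum_add_distrib]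
      exact Finset.sum_congr rfl fun i _ => by rw [add_smul]
  | mul_X p n ih =>
      rw [map_mul, ih, Finset.sum_mul]
      refine Finset.sum_congr rfl fun i _ => ?_
      rw [smul_mul_assoc, ← map_mul, shift i n, ← smul_mk, smul_smul, map_mul, eval_X, mul_comm (eval (pt i) p)]

lemma he : ∀ i, eval (pt i) ePoly = if i.val < 3 then 1 else 0 := by
  have h : ∀ i, eval (pt i) ePoly =
      2 * pt i 0 + 2 * pt i 1 + pt i 0 * pt i 1 + 2 * (pt i 0 * pt i 2)
        + 2 * (pt i 1 * pt i 2) + pt i 0 * pt i 1 * pt i 2 := by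
    intro i; simp [ePoly]; ring
  intro i; rw [h i]; clear h; revert i; decide

lemma idem : IsIdempotentElem (Ideal.Quotient.mk I3 ePoly) := by
  show _ * _ = _
  rw [← map_mul, key_repr (ePoly * ePoly), key_repr ePoly]
  refine Finset.sum_congr rfl fun i _ => ?_
  congr 1
  rw [map_mul, he i]
  split_ifs <;> norm_num

lemma li : LinearIndependent (ZMod 3) (fun i : Fin 8 => Ideal.Quotient.mk I3 (gp i)) := by
  rw [Fintype.linearIndependent_iff]
  intro c hc i
  have h0 : Ideal.Quotient.mk I3 (∑ j, C (c j) * gp j) = 0 := by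
    rw [map_sum, ← hc]
    exact Finset.sum_congr rfl fun j _ => (smul_mk _ _).symm
  have hm : (∑ j, C (c j) * gp j : P3) ∈ I3 := Ideal.Quotient.eq_zero_iff_mem.mp h0
  have he2 := eval_I3 i hm
  rw [map_sum] at he2
  simp only [map_mul, eval_C, eval_gp, mul_ite, mul_one, mul_zero] at he2
  rwa [Finset.sum_ite_eq Finset.univ i c, if_pos (Finset.mem_univ i)] at he2

lemma span_top : ⊤ ≤ Submodule.span (ZMod 3)
    (Set.range fun i : Fin 8 => Ideal.Quotient.mk I3 (gp i)) := by
  intro x _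
  obtain ⟨f, rfl⟩ := Ideal.Quotient.mk_surjective x
  rw [key_repr f]
  exact Submodule.sum_mem _ fun i _ =>
    Submodule.smul_mem _ _ (Submodule.subset_span ⟨i, rfl⟩)

lemma finrank8 : Module.finrank (ZMod 3) (P3 ⧸ I3) = 8 := by
  rw [Module.finrank_eq_card_basis (Module.Basis.mk li span_top)]
  simp

lemma gp_mul (i : Fin 8) (f : P3) :
    Ideal.Quotient.mk I3 (gp i * f) = eval (pt i) f • Ideal.Quotient.mk I3 (gp i) := by
  rw [key_repr (gp i * f), Finset.sum_eq_single i]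
  · rw [map_mul, eval_gp, if_pos rfl, one_mul]
  · intro k _ hk
    rw [map_mul, eval_gp, if_neg hk, zero_mul, zero_smul]
  · intro hi; exact absurd (Finset.mem_univ i) hi

lemma hgpC (i : Fin 8) (hi : eval (pt i) ePoly = 1) :
    Ideal.Quotient.mk I3 (gp i) ∈ Ideal.span {Ideal.Quotient.mk I3 ePoly} := by
  rw [Ideal.mem_span_singleton]
  refine ⟨Ideal.Quotient.mk I3 (gp i), ?_⟩
  rw [← map_mul, mul_comm ePoly, gp_mul i ePoly, hi, one_smul]

def idx : Fin 3 → Fin 8 := ![0, 1, 2]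

lemma idx_inj : Function.Injective idx := by decide

lemma span_eq : Submodule.restrictScalars (ZMod 3) (Ideal.span {Ideal.Quotient.mk I3 ePoly}) =
    Submodule.span (ZMod 3)
      (Set.range ((fun i : Fin 8 => Ideal.Quotient.mk I3 (gp i)) ∘ idx)) := by
  apply le_antisymm
  · intro x hx
    rw [Submodule.restrictScalars_mem, Ideal.mem_span_singleton'] at hx
    obtain ⟨a, ha⟩ := hx
    obtain ⟨h, rfl⟩ := Ideal.Quotient.mk_surjective a
    rw [← ha, ← map_mul, key_repr (h * ePoly)]
    refine Submodule.sum_mem _ fun i _ => ?_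
    by_cases hi : i.val < 3
    · refine Submodule.smul_mem _ _ (Submodule.subset_span ?_)
      fin_cases i
      · exact ⟨0, rfl⟩
      · exact ⟨1, rfl⟩
      · exact ⟨2, rfl⟩
      all_goals exact absurd hi (by decide)
    · have hz : eval (pt i) (h * ePoly) = 0 := by
        rw [map_mul, he i, if_neg hi, mul_zero]
      rw [hz, zero_smul]
      exact Submodule.zero_mem _
  · rw [Submodule.span_le]
    rintro x ⟨k, rfl⟩
    rw [SetLike.mem_coe, Submodule.restrictScalars_mem]
    refine hgpC (idx k) ?_
    rw [he]
    fin_cases k <;> rfl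

lemma finrank3 : Module.finrank (ZMod 3)
    (Submodule.restrictScalars (ZMod 3) (Ideal.span {Ideal.Quotient.mk I3 ePoly})) = 3 := by
  rw [span_eq, finrank_span_eq_card (li.comp idx idx_inj)]
  simp

lemma evalF (i : Fin 8) (c : Fin 8 → ZMod 3) :
    eval (pt i) (Fc c) = ∑ j, c j * Amat i j := by
  rw [Fc, map_sum]
  refine Finset.sum_congr rfl fun j _ => ?_
  rw [eval_monomial]
  congr 1
  rw [Finsupp.prod_fintype _ _ (fun t => pow_zero _)]
  rfl

lemma suppF (c : Fin 8 → ZMod 3) :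
    (Fc c).support = (Finset.univ.filter fun j => c j ≠ 0).image mfun := by
  have hcoeff : ∀ m, coeff m (Fc c) =
      ∑ j, if mfun j = m then c j else 0 := by
    intro m
    rw [Fc, MvPolynomial.coeff_sum]
    exact Finset.sum_congr rfl fun j _ => coeff_monomial m (mfun j) (c j)
  ext m
  rw [mem_support_iff, hcoeff, Finset.mem_image]
  constructor
  · intro hm
    by_cases hr : ∃ j, mfun j = m
    · obtain ⟨j, rfl⟩ := hr
      refine ⟨j, ?_, rfl⟩
      rw [Finset.mem_filter]
      refine ⟨Finset.mem_univ j, ?_⟩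
      intro hcj
      apply hm
      rw [Finset.sum_eq_single j]
      · rw [if_pos rfl, hcj]
      · intro k _ hk
        exact if_neg fun hmk => hk (mfun_inj hmk)
      · intro hj; exact absurd (Finset.mem_univ j) hj
    · exact absurd (Finset.sum_eq_zero fun j _ =>
        if_neg fun hj => hr ⟨j, hj⟩) hm
  · rintro ⟨j, hj, rfl⟩
    rw [Finset.mem_filter] at hj
    rw [Finset.sum_eq_single j]
    · rw [if_pos rfl]; exact hj.2
    · intro k _ hk
      exact if_neg fun hmk => hk (mfun_inj hmk)
    · intro hj'; exact absurd (Finset.mem_univ j) hj'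

lemma coeffF (c : Fin 8 → ZMod 3) (j : Fin 8) : coeff (mfun j) (Fc c) = c j := by
  rw [Fc, MvPolynomial.coeff_sum]
  rw [Finset.sum_eq_single j]
  · rw [coeff_monomial, if_pos rfl]
  · intro k _ hk
    rw [coeff_monomial, if_neg fun hmk => hk (mfun_inj hmk)]
  · intro hj; exact absurd (Finset.mem_univ j) hj

lemma bits_lt : ∀ j t, bits j t < 2 := by decide

lemma degF (c : Fin 8 → ZMod 3) (t : Fin 3) : degreeOf t (Fc c) < 2 := by
  rw [degreeOf_lt_iff (by norm_num)]
  intro m hm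
  rw [suppF, Finset.mem_image] at hm
  obtain ⟨j, _, rfl⟩ := hm
  rw [mfun_apply]
  exact bits_lt j t

lemma redF (f : P3) (hdeg : ∀ t, degreeOf t f < 2) :
    f = Fc (fun j => coeff (mfun j) f) := by
  have hsupp : f.support ⊆ Finset.univ.image mfun := by
    intro m hm
    have hmt : ∀ t, m t < 2 := fun t => (degreeOf_lt_iff (by norm_num)).mp (hdeg t) m hm
    rw [Finset.mem_image]
    refine ⟨⟨m 0 + 2 * m 1 + 4 * m 2, by have := hmt 0; have := hmt 1; have := hmt 2; omega⟩,
      Finset.mem_univ _, ?_⟩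
    have e0 : m 0 = 0 ∨ m 0 = 1 := by have := hmt 0; omega
    have e1 : m 1 = 0 ∨ m 1 = 1 := by have := hmt 1; omega
    have e2 : m 2 = 0 ∨ m 2 = 1 := by have := hmt 2; omega
    ext t
    rw [mfun_apply]
    fin_cases t <;> rcases e0 with h0|h0 <;> rcases e1 with h1|h1 <;> rcases e2 with h2|h2 <;>
      simp [h0, h1, h2, bits] <;> rfl
  calc f = ∑ m ∈ f.support, monomial m (coeff m f) := as_sum f
  _ = ∑ m ∈ Finset.univ.image mfun, monomial m (coeff m f) :=
      Finset.sum_subset hsupp fun m _ hm => by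
        rw [notMem_support_iff.mp hm, map_zero]
  _ = Fc (fun j => coeff (mfun j) f) := by
      rw [Fc]
      exact Finset.sum_image fun x _ y _ hxy => mfun_inj hxy

lemma orthA : ∀ j j' : Fin 8, (∑ i, 2 * Amat i j * Amat i j') = if j' = j then 1 else 0 := by
  decide

lemma inv_solve (c u : Fin 8 → ZMod 3) (hu : ∀ i, u i = ∑ j', c j' * Amat i j') (j : Fin 8) :
    c j = ∑ i, (2 * Amat i j) * u i := by
  have h : ∑ i, (2 * Amat i j) * u i = ∑ j', c j' * ∑ i, 2 * Amat i j * Amat i j' := by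
    simp only [hu, Finset.mul_sum]
    rw [Finset.sum_comm]
    refine Finset.sum_congr rfl fun j' _ => ?_
    exact Finset.sum_congr rfl fun i _ => by ring
  rw [h]
  simp only [orthA, mul_ite, mul_one, mul_zero]
  rw [Finset.sum_ite_eq' Finset.univ j c, if_pos (Finset.mem_univ j)]

lemma wcount : ∀ w : Fin 3 → ZMod 3, w ≠ 0 →
    4 ≤ ((Finset.univ.filter fun j => (∑ k, (2 * Amat (idx k) j) * w k) ≠ 0)).card := by
  decide

lemma part4 (f : MvPolynomial (Fin 3) (ZMod 3))
    (hmem : Ideal.Quotient.mk I3 f ∈ Ideal.span {Ideal.Quotient.mk I3 ePoly})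
    (hne : Ideal.Quotient.mk I3 f ≠ 0) (hdeg : ∀ t, f.degreeOf t < 2) :
    4 ≤ f.support.card := by
  set c : Fin 8 → ZMod 3 := fun j => coeff (mfun j) f with hc
  have hf : f = Fc c := redF f hdeg
  have hu : ∀ i, eval (pt i) f = ∑ j, c j * Amat i j := by
    intro i
    conv_lhs => rw [hf]
    exact evalF i c
  rw [Ideal.mem_span_singleton'] at hmem
  obtain ⟨a, ha⟩ := hmem
  obtain ⟨h, rfl⟩ := Ideal.Quotient.mk_surjective a
  have hd : ∀ i, eval (pt i) f = eval (pt i) h * eval (pt i) ePoly := by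
    intro i
    have hmem2 : (h * ePoly - f : P3) ∈ I3 := by
      rw [← Ideal.Quotient.eq, map_mul]
      exact ha
    have h0 := eval_I3 i hmem2
    rw [map_sub, map_mul, sub_eq_zero] at h0
    exact h0.symm
  have hzero : ∀ i : Fin 8, ¬ (i.val < 3) → eval (pt i) f = 0 := by
    intro i hi
    rw [hd i, he i, if_neg hi, mul_zero]
  set w : Fin 3 → ZMod 3 := fun k => eval (pt (idx k)) f with hw
  have hcw : ∀ j, c j = ∑ k, (2 * Amat (idx k) j) * w k := by
    intro j
    rw [inv_solve c (fun i => eval (pt i) f) hu j]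
    rw [Fin.sum_univ_eight, Fin.sum_univ_three]
    rw [hzero 3 (by decide), hzero 4 (by decide), hzero 5 (by decide),
      hzero 6 (by decide), hzero 7 (by decide)]
    simp only [mul_zero, add_zero]
    rfl
  have hwne : w ≠ 0 := by
    intro hw0
    apply hne
    have hc0 : c = 0 := by
      funext j
      rw [hcw j, hw0]
      simp
    rw [hf, hc0]
    have : Fc 0 = 0 := by simp [Fc]
    rw [this, map_zero]
  have hsupp : f.support = (Finset.univ.filter fun j => c j ≠ 0).image mfun := by
    conv_lhs => rw [hf]
    exact suppF c
  rw [hsupp, Finset.card_image_of_injective _ mfun_inj]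
  have hfe : (Finset.univ.filter fun j => c j ≠ 0) =
      (Finset.univ.filter fun j => (∑ k, (2 * Amat (idx k) j) * w k) ≠ 0) := by
    apply Finset.filter_congr
    intro j _
    rw [hcw j]
  rw [hfe]
  exact wcount w hwne

def w0 : Fin 3 → ZMod 3 := ![1, 0, 1]

def c0 : Fin 8 → ZMod 3 := fun j => ∑ k, (2 * Amat (idx k) j) * w0 k

lemma hvals : ∀ i, eval (pt i) (Fc c0) = ![1, 0, 1, 0, 0, 0, 0, 0] i := by
  intro i
  rw [evalF]
  revert i
  decide

lemma part5 : ∃ f : MvPolynomial (Fin 3) (ZMod 3),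
    Ideal.Quotient.mk I3 f ∈ Ideal.span {Ideal.Quotient.mk I3 ePoly} ∧
    Ideal.Quotient.mk I3 f ≠ 0 ∧ (∀ t, f.degreeOf t < 2) ∧ f.support.card = 4 := by
  refine ⟨Fc c0, ?_, ?_, degF c0, ?_⟩
  · rw [← Submodule.restrictScalars_mem (ZMod 3), key_repr (Fc c0)]
    have hv3 : ∀ i : Fin 8, ¬ i.val < 3 → ![1, 0, 1, 0, 0, 0, 0, 0] i = (0 : ZMod 3) := by
      decide
    refine Submodule.sum_mem _ fun i _ => ?_
    by_cases hi : i.val < 3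
    · refine Submodule.smul_mem _ _ ?_
      rw [Submodule.restrictScalars_mem]
      exact hgpC i (by rw [he i, if_pos hi])
    · rw [hvals i, hv3 i hi, zero_smul]
      exact Submodule.zero_mem _
  · intro h0
    have hev := eval_I3 0 (Ideal.Quotient.eq_zero_iff_mem.mp h0)
    rw [hvals 0] at hev
    exact absurd hev (by decide)
  · rw [suppF, Finset.card_image_of_injective _ mfun_inj]
    decide

end Opt3
end

/-- Over `F₃`, in `R = F₃[x,y,z]/(x²-1,y²-1,z²-1)`, the element
`e = 2x + 2y + xy + 2xz + 2yz + xyz` is idempotent, and the ideal `C = ⟨e⟩` is a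
linear code of length 8 (`dim_F₃ R = 8`) and dimension 3 over `F₃` whose minimum
Hamming distance (minimum number of nonzero coefficients of the reduced
representative of a nonzero codeword) is 4. -/
theorem optimal_3d_code_F3 :
    IsIdempotentElem (Ideal.Quotient.mk I3 ePoly) ∧
    Module.finrank (ZMod 3) (MvPolynomial (Fin 3) (ZMod 3) ⧸ I3) = 8 ∧
    Module.finrank (ZMod 3)
      (Submodule.restrictScalars (ZMod 3)
        (Ideal.span {Ideal.Quotient.mk I3 ePoly})) = 3 ∧
    (∀ f : MvPolynomial (Fin 3) (ZMod 3),
      Ideal.Quotient.mk I3 f ∈ Ideal.span {Ideal.Quotient.mk I3 ePoly} →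
      Ideal.Quotient.mk I3 f ≠ 0 → (∀ t, f.degreeOf t < 2) → 4 ≤ f.support.card) ∧
    (∃ f : MvPolynomial (Fin 3) (ZMod 3),
      Ideal.Quotient.mk I3 f ∈ Ideal.span {Ideal.Quotient.mk I3 ePoly} ∧
      Ideal.Quotient.mk I3 f ≠ 0 ∧ (∀ t, f.degreeOf t < 2) ∧ f.support.card = 4) :=
  ⟨Opt3.idem, Opt3.finrank8, Opt3.finrank3, Opt3.part4, Opt3.part5⟩
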